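/- Under the hypotheses allowing differentiation under the integral sign (joint continuity of Ṡ(γ,x) = ∂_γ S(γ,x) and a locally uniform integrable dominating function for the γ-derivatives of both y ↦ σ(y)^{-2} exp(2∫_0^y S(γ,v)/σ(v)² dv) and y ↦ F(y) σ(y)^{-2} exp(2∫_0^y S(γ,v)/σ(v)² dv)), the function ϑ(γ) = ∫_ℝ F(y) f(γ,y) dy is differentiable and its derivative equals ϑ̇(γ) = 2( ∫_ℝ F(x)(∫_0^x Ṡ(γ,v)/σ(v)² dv) f(γ,x) dx − ϑ(γ) ∫_ℝ (∫_0^z Ṡ(γ,v)/σ(v)² dv) f(γ,z) dz ), which equals the double integral 2 ∫_ℝ ∫_ℝ F(x)(∫_z^x Ṡ(γ,v)/σ(v)² dv) f(γ,x) f(γ,z) dx dz, i.e., 2 E_γ[F(ξ) ∫_ζ^ξ Ṡ(γ,v)/σ(v)² dv] for ξ, ζ independent with density f(γ,·). -/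

import Mathlib

/-! Write `ϑ = H / G` with `G(γ) = ∫ k(γ,·)` and `H(γ) = ∫ F k(γ,·)`, where `k` is the unnormalised
kernel. Since `∂_γ k = 2 J k` with `J(γ, y) = ∫_0^y Ṡ(γ,v)/σ(v)² dv`, both integrals may be
differentiated under the integral sign, and the quotient rule gives `ϑ̇ = 2 (E[F J] - E[F] E[J])`.
The double integral is the same covariance, expanded through `∫_z^x = J(x) - J(z)` and `∫ f = 1`. -/

open MeasureTheory Real Set Filter intervalIntegral

noncomputable section

/-- Unnormalized invariant density for the parametric drift `S(γ, ·)`. -/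
def paramKernel (σ : ℝ → ℝ) (S : ℝ → ℝ → ℝ) (γ y : ℝ) : ℝ :=
  ((σ y) ^ 2)⁻¹ * Real.exp (2 * ∫ v in (0:ℝ)..y, S γ v / (σ v) ^ 2)

/-- Normalizing constant `G(γ)`. -/
def paramG (σ : ℝ → ℝ) (S : ℝ → ℝ → ℝ) (γ : ℝ) : ℝ :=
  ∫ y : ℝ, paramKernel σ S γ y

/-- Invariant density `f(γ, y) = G(γ)⁻¹ σ(y)⁻² exp(2 ∫_0^y S(γ,v)/σ(v)² dv)`. -/
def paramDens (σ : ℝ → ℝ) (S : ℝ → ℝ → ℝ) (γ y : ℝ) : ℝ :=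
  (paramG σ S γ)⁻¹ * paramKernel σ S γ y

theorem hasDerivAt_intervalIntegral_of_continuous_deriv {U : Set ℝ} (hU : IsOpen U)
    {f f' : ℝ → ℝ → ℝ} (hf : ∀ γ ∈ U, Continuous (f γ)) (hf' : Continuous (Function.uncurry f'))
    (hderiv : ∀ v, ∀ γ ∈ U, HasDerivAt (fun γ' => f γ' v) (f' γ v) γ) (a b : ℝ) {γ : ℝ}
    (hγ : γ ∈ U) :
    HasDerivAt (fun γ' => ∫ v in a..b, f γ' v) (∫ v in a..b, f' γ v) γ := by
  obtain ⟨ε, hε, hball⟩ := Metric.isOpen_iff.1 hU γ hγ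
  obtain ⟨C, hC⟩ := ((isCompact_closedBall γ ε).prod (isCompact_uIcc (a := a) (b := b))
    ).exists_bound_of_continuousOn hf'.continuousOn
  have hbound : ∀ᵐ v ∂volume, v ∈ uIoc a b → ∀ x ∈ Metric.ball γ ε, ‖f' x v‖ ≤ C :=
    .of_forall fun v hv x hx =>
      hC (x, v) ⟨Metric.ball_subset_closedBall hx, uIoc_subset_uIcc hv⟩
  exact (hasDerivAt_integral_of_dominated_loc_of_deriv_le (Metric.ball_mem_nhds γ hε)
    (eventually_of_mem (hU.mem_nhds hγ) fun x hx => (hf x hx).aestronglyMeasurable)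
    ((hf γ hγ).intervalIntegrable a b)
    (hf'.comp (Continuous.prodMk_right γ)).aestronglyMeasurable hbound
    intervalIntegrable_const
    (.of_forall fun v _ x hx => hderiv v x (hball hx))).2

def driftPrimitive (σ : ℝ → ℝ) (S : ℝ → ℝ → ℝ) (γ y : ℝ) : ℝ :=
  ∫ v in (0:ℝ)..y, S γ v / σ v ^ 2

theorem intervalIntegral_eq_driftPrimitive (σ : ℝ → ℝ) (S : ℝ → ℝ → ℝ) (γ y : ℝ) :
    ∫ v in (0:ℝ)..y, S γ v / σ v ^ 2 = driftPrimitive σ S γ y := rfl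

section Kernel

variable {σ : ℝ → ℝ} {S Sdot : ℝ → ℝ → ℝ} {Γ : Set ℝ}

theorem continuous_div_sq {h : ℝ → ℝ} (hσc : Continuous σ) (hσ : ∀ x, σ x ≠ 0)
    (hh : Continuous h) : Continuous fun v => h v / σ v ^ 2 :=
  hh.div (hσc.pow 2) fun v => pow_ne_zero 2 (hσ v)

theorem continuous_driftPrimitive (hσc : Continuous σ) (hσ : ∀ x, σ x ≠ 0) {γ : ℝ}
    (hS : Continuous (S γ)) : Continuous (driftPrimitive σ S γ) :=
  continuous_primitive (fun a b => (continuous_div_sq hσc hσ hS).intervalIntegrable a b) 0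

theorem hasDerivAt_driftPrimitive (hσc : Continuous σ) (hσ : ∀ x, σ x ≠ 0) (hΓ : IsOpen Γ)
    (hScont : ∀ γ ∈ Γ, Continuous (S γ))
    (hSdot : ∀ x, ∀ γ ∈ Γ, HasDerivAt (fun γ' => S γ' x) (Sdot γ x) γ)
    (hSdotCont : Continuous (Function.uncurry Sdot)) (y : ℝ) {γ : ℝ} (hγ : γ ∈ Γ) :
    HasDerivAt (fun γ' => driftPrimitive σ S γ' y) (driftPrimitive σ Sdot γ y) γ :=
  hasDerivAt_intervalIntegral_of_continuous_deriv (f' := fun γ v => Sdot γ v / σ v ^ 2) hΓ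
    (fun γ hγ => continuous_div_sq hσc hσ (hScont γ hγ))
    (by exact hSdotCont.div ((hσc.comp continuous_snd).pow 2) fun p => pow_ne_zero 2 (hσ p.2))
    (fun v γ hγ => (hSdot v γ hγ).div_const _) 0 y hγ

theorem paramKernel_eq (γ y : ℝ) :
    paramKernel σ S γ y = (σ y ^ 2)⁻¹ * exp (2 * driftPrimitive σ S γ y) := rfl

theorem paramKernel_pos (hσ : ∀ x, σ x ≠ 0) (γ y : ℝ) : 0 < paramKernel σ S γ y :=
  mul_pos (inv_pos.2 (sq_pos_of_ne_zero (hσ y))) (exp_pos _)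

theorem continuous_paramKernel (hσc : Continuous σ) (hσ : ∀ x, σ x ≠ 0) {γ : ℝ}
    (hS : Continuous (S γ)) : Continuous (paramKernel σ S γ) :=
  ((hσc.pow 2).inv₀ fun v => pow_ne_zero 2 (hσ v)).mul
    (continuous_const.mul (continuous_driftPrimitive hσc hσ hS)).rexp

theorem hasDerivAt_paramKernel (hσc : Continuous σ) (hσ : ∀ x, σ x ≠ 0) (hΓ : IsOpen Γ)
    (hScont : ∀ γ ∈ Γ, Continuous (S γ))
    (hSdot : ∀ x, ∀ γ ∈ Γ, HasDerivAt (fun γ' => S γ' x) (Sdot γ x) γ)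
    (hSdotCont : Continuous (Function.uncurry Sdot)) (y : ℝ) {γ : ℝ} (hγ : γ ∈ Γ) :
    HasDerivAt (fun γ' => paramKernel σ S γ' y)
      (2 * driftPrimitive σ Sdot γ y * paramKernel σ S γ y) γ := by
  refine (((hasDerivAt_driftPrimitive hσc hσ hΓ hScont hSdot hSdotCont y hγ).const_mul 2).exp
    ).const_mul (σ y ^ 2)⁻¹ |>.congr_deriv ?_
  rw [paramKernel_eq]
  ring

theorem intervalIntegral_eq_driftPrimitive_sub (hσc : Continuous σ) (hσ : ∀ x, σ x ≠ 0)
    {γ : ℝ} (hS : Continuous (S γ)) (x z : ℝ) :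
    ∫ v in z..x, S γ v / σ v ^ 2 = driftPrimitive σ S γ x - driftPrimitive σ S γ z :=
  (integral_interval_sub_left ((continuous_div_sq hσc hσ hS).intervalIntegrable 0 x)
    ((continuous_div_sq hσc hσ hS).intervalIntegrable 0 z)).symm

theorem paramG_pos (hσ : ∀ x, σ x ≠ 0) {γ : ℝ} (hG : Integrable (paramKernel σ S γ)) :
    0 < paramG σ S γ := by
  rw [paramG, integral_pos_iff_support_of_nonneg (fun y => (paramKernel_pos hσ γ y).le) hG,
    Function.support_eq_univ fun y => (paramKernel_pos hσ γ y).ne']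
  simp

theorem paramDens_pos (hσ : ∀ x, σ x ≠ 0) {γ : ℝ} (hG : Integrable (paramKernel σ S γ))
    (y : ℝ) : 0 < paramDens σ S γ y :=
  mul_pos (inv_pos.2 (paramG_pos hσ hG)) (paramKernel_pos hσ γ y)

theorem integrable_mul_paramDens_of_integrable_abs_mul (hσc : Continuous σ)
    (hσ : ∀ x, σ x ≠ 0) {γ : ℝ} (hS : Continuous (S γ)) (hG : Integrable (paramKernel σ S γ))
    {φ : ℝ → ℝ} (hφ : Measurable φ) (hint : Integrable fun y => |φ y| * paramDens σ S γ y) :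
    Integrable fun y => φ y * paramDens σ S γ y :=
  hint.mono' (hφ.mul (continuous_const.mul (continuous_paramKernel hσc hσ hS)).measurable
    ).aestronglyMeasurable
    (.of_forall fun y => by
      rw [norm_mul, norm_eq_abs, norm_eq_abs, abs_of_pos (paramDens_pos hσ hG y)])

theorem integral_mul_paramDens (φ : ℝ → ℝ) (γ : ℝ) :
    ∫ y, φ y * paramDens σ S γ y = (paramG σ S γ)⁻¹ * ∫ y, φ y * paramKernel σ S γ y := by
  rw [← MeasureTheory.integral_const_mul]
  simp only [paramDens, mul_left_comm]

theorem integral_paramDens (hσ : ∀ x, σ x ≠ 0) {γ : ℝ} (hG : Integrable (paramKernel σ S γ)) :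
    ∫ y, paramDens σ S γ y = 1 := by
  have h := integral_mul_paramDens (σ := σ) (S := S) (fun _ => 1) γ
  simp only [one_mul] at h
  rw [h, ← paramG, inv_mul_cancel₀ (paramG_pos hσ hG).ne']

theorem integrable_mul_paramDens_iff (hσ : ∀ x, σ x ≠ 0) {γ : ℝ}
    (hG : Integrable (paramKernel σ S γ)) {φ : ℝ → ℝ} :
    Integrable (fun y => φ y * paramDens σ S γ y) ↔
      Integrable (fun y => φ y * paramKernel σ S γ y) := by
  simp only [paramDens, mul_left_comm _ (paramG σ S γ)⁻¹]
  exact integrable_const_mul_iff (inv_pos.2 (paramG_pos hσ hG)).ne'.isUnit _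

theorem hasDerivAt_integral_mul_paramKernel (hσc : Continuous σ) (hσ : ∀ x, σ x ≠ 0)
    (hΓ : IsOpen Γ) (hScont : ∀ γ ∈ Γ, Continuous (S γ))
    (hSdot : ∀ x, ∀ γ ∈ Γ, HasDerivAt (fun γ' => S γ' x) (Sdot γ x) γ)
    (hSdotCont : Continuous (Function.uncurry Sdot)) {φ : ℝ → ℝ} (hφ : Measurable φ) {γ : ℝ}
    (hγ : γ ∈ Γ) (hint : Integrable fun y => φ y * paramKernel σ S γ y) {δ : ℝ} (hδ : 0 < δ)
    {g : ℝ → ℝ} (hg : Integrable g)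
    (hbound : ∀ γ', |γ' - γ| < δ → ∀ y,
      |φ y * (2 * driftPrimitive σ Sdot γ' y) * paramKernel σ S γ' y| ≤ g y) :
    Integrable (fun y => φ y * driftPrimitive σ Sdot γ y * paramKernel σ S γ y) ∧
      HasDerivAt (fun γ' => ∫ y, φ y * paramKernel σ S γ' y)
        (2 * ∫ y, φ y * driftPrimitive σ Sdot γ y * paramKernel σ S γ y) γ := by
  obtain ⟨ε, hε, hball⟩ := Metric.isOpen_iff.1 hΓ γ hγ
  have hmem : ∀ x ∈ Metric.ball γ (min δ ε), x ∈ Γ ∧ |x - γ| < δ := fun x hx =>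
    ⟨hball (Metric.ball_subset_ball (min_le_right δ ε) hx),
      (Metric.mem_ball.1 hx).trans_le (min_le_left δ ε)⟩
  have hJ : Continuous (driftPrimitive σ Sdot γ) :=
    continuous_driftPrimitive hσc hσ (hSdotCont.uncurry_left γ)
  obtain ⟨hint', hderiv⟩ := hasDerivAt_integral_of_dominated_loc_of_deriv_le
    (F := fun x y => φ y * paramKernel σ S x y)
    (F' := fun x y => φ y * (2 * driftPrimitive σ Sdot x y) * paramKernel σ S x y)
    (Metric.ball_mem_nhds γ (lt_min hδ hε))
    (eventually_of_mem (hΓ.mem_nhds hγ) fun x hx =>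
      (hφ.mul (continuous_paramKernel hσc hσ (hScont x hx)).measurable).aestronglyMeasurable)
    hint
    ((hφ.mul (continuous_const.mul hJ).measurable).mul
      (continuous_paramKernel hσc hσ (hScont γ hγ)).measurable).aestronglyMeasurable
    (.of_forall fun y x hx => hbound x (hmem x hx).2 y) hg
    (.of_forall fun y x hx => by
      simpa only [mul_assoc] using
        (hasDerivAt_paramKernel hσc hσ hΓ hScont hSdot hSdotCont y (hmem x hx).1).const_mul (φ y))
  refine ⟨(hint'.div_const 2).congr (.of_forall fun y => by ring), hderiv.congr_deriv ?_⟩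
  rw [← MeasureTheory.integral_const_mul]
  congr 1 with y
  ring

theorem hasDerivAt_paramG (hσc : Continuous σ) (hσ : ∀ x, σ x ≠ 0)
    (hΓ : IsOpen Γ) (hScont : ∀ γ ∈ Γ, Continuous (S γ))
    (hSdot : ∀ x, ∀ γ ∈ Γ, HasDerivAt (fun γ' => S γ' x) (Sdot γ x) γ)
    (hSdotCont : Continuous (Function.uncurry Sdot)) {γ : ℝ} (hγ : γ ∈ Γ)
    (hG : Integrable (paramKernel σ S γ)) {δ : ℝ} (hδ : 0 < δ) {g : ℝ → ℝ} (hg : Integrable g)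
    (hbound : ∀ γ', |γ' - γ| < δ → ∀ y,
      |2 * driftPrimitive σ Sdot γ' y * paramKernel σ S γ' y| ≤ g y) :
    Integrable (fun y => driftPrimitive σ Sdot γ y * paramKernel σ S γ y) ∧
      HasDerivAt (paramG σ S) (2 * ∫ y, driftPrimitive σ Sdot γ y * paramKernel σ S γ y) γ := by
  obtain ⟨hint, hderiv⟩ := hasDerivAt_integral_mul_paramKernel hσc hσ hΓ hScont hSdot hSdotCont
    (φ := fun _ => 1) measurable_const hγ (by simpa only [one_mul] using hG) hδ hg
    fun γ' h y => by rw [one_mul]; exact hbound γ' h y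
  simp only [one_mul] at hint hderiv
  exact ⟨hint, hderiv⟩

end Kernel

theorem HasDerivAt.inv_mul {G H : ℝ → ℝ} {G' H' γ : ℝ} (hG : HasDerivAt G G' γ)
    (hH : HasDerivAt H H' γ) (hG0 : G γ ≠ 0) :
    HasDerivAt (fun x => (G x)⁻¹ * H x)
      ((G γ)⁻¹ * H' - (G γ)⁻¹ * H γ * ((G γ)⁻¹ * G')) γ :=
  ((hG.inv hG0).mul hH).congr_deriv (by simp only [Pi.inv_apply]; field_simp; ring)

theorem integral_integral_mul_sub_mul {α : Type*} [MeasurableSpace α] {μ : Measure α}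
    {f F J : α → ℝ} (hf : Integrable f μ) (hf1 : ∫ z, f z ∂μ = 1)
    (hJf : Integrable (fun z => J z * f z) μ) (hFJf : Integrable (fun x => F x * J x * f x) μ)
    (hFf : Integrable (fun x => F x * f x) μ) :
    ∫ x, ∫ z, F x * (J x - J z) * f x * f z ∂μ ∂μ
      = ∫ x, F x * J x * f x ∂μ - (∫ x, F x * f x ∂μ) * ∫ z, J z * f z ∂μ := by
  have hinner : ∀ x, ∫ z, F x * (J x - J z) * f x * f z ∂μ
      = F x * J x * f x - F x * f x * ∫ z, J z * f z ∂μ := fun x => by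
    calc ∫ z, F x * (J x - J z) * f x * f z ∂μ
        = ∫ z, (F x * J x * f x * f z - F x * f x * (J z * f z)) ∂μ :=
          integral_congr_ae (.of_forall fun z => by ring)
      _ = F x * J x * f x - F x * f x * ∫ z, J z * f z ∂μ := by
          rw [integral_sub (hf.const_mul _) (hJf.const_mul _), MeasureTheory.integral_const_mul,
            MeasureTheory.integral_const_mul, hf1, mul_one]
  simp only [hinner]
  rw [integral_sub hFJf (hFf.mul_const _), MeasureTheory.integral_mul_const]

theorem moment_estimation_stmt11_general
    (σ : ℝ → ℝ) (hσc : Continuous σ) (hσpos : ∀ x, 0 < σ x)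
    (Γ : Set ℝ) (hΓopen : IsOpen Γ)
    (S Sdot : ℝ → ℝ → ℝ)
    (hScont : ∀ γ ∈ Γ, Continuous (S γ))
    (hGfin : ∀ γ ∈ Γ, Integrable (paramKernel σ S γ))
    (F : ℝ → ℝ) (hFm : Measurable F)
    (hFint : ∀ γ ∈ Γ, Integrable (fun y => |F y| * paramDens σ S γ y))
    (hSdot : ∀ x : ℝ, ∀ γ ∈ Γ, HasDerivAt (fun γ' => S γ' x) (Sdot γ x) γ)
    (hSdotCont : Continuous (Function.uncurry Sdot))
    (hdom : ∀ γ₀ ∈ Γ, ∃ δ > (0:ℝ), ∃ g₁ g₂ : ℝ → ℝ, Integrable g₁ ∧ Integrable g₂ ∧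
      ∀ γ : ℝ, |γ - γ₀| < δ → ∀ y : ℝ,
        |2 * (∫ v in (0:ℝ)..y, Sdot γ v / (σ v) ^ 2) * paramKernel σ S γ y| ≤ g₁ y ∧
        |F y * (2 * (∫ v in (0:ℝ)..y, Sdot γ v / (σ v) ^ 2)) * paramKernel σ S γ y| ≤ g₂ y) :
    ∀ γ ∈ Γ,
      HasDerivAt (fun γ' => ∫ y : ℝ, F y * paramDens σ S γ' y)
        (2 * ((∫ x : ℝ, F x * (∫ v in (0:ℝ)..x, Sdot γ v / (σ v) ^ 2) * paramDens σ S γ x)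
          - (∫ y : ℝ, F y * paramDens σ S γ y)
            * ∫ z : ℝ, (∫ v in (0:ℝ)..z, Sdot γ v / (σ v) ^ 2) * paramDens σ S γ z)) γ ∧
      2 * ((∫ x : ℝ, F x * (∫ v in (0:ℝ)..x, Sdot γ v / (σ v) ^ 2) * paramDens σ S γ x)
          - (∫ y : ℝ, F y * paramDens σ S γ y)
            * ∫ z : ℝ, (∫ v in (0:ℝ)..z, Sdot γ v / (σ v) ^ 2) * paramDens σ S γ z)
        = 2 * ∫ x : ℝ, ∫ z : ℝ,
            F x * (∫ v in z..x, Sdot γ v / (σ v) ^ 2) * paramDens σ S γ x * paramDens σ S γ z := by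
  simp only [intervalIntegral_eq_driftPrimitive] at hdom ⊢
  intro γ hγ
  have hσ : ∀ x, σ x ≠ 0 := fun x => (hσpos x).ne'
  have hG := hGfin γ hγ
  obtain ⟨δ, hδ, g₁, g₂, hg₁, hg₂, hbound⟩ := hdom γ hγ
  have hFf := integrable_mul_paramDens_of_integrable_abs_mul hσc hσ (hScont γ hγ) hG hFm
    (hFint γ hγ)
  obtain ⟨hJk, hGderiv⟩ := hasDerivAt_paramG hσc hσ hΓopen hScont hSdot hSdotCont hγ hG hδ hg₁
    fun γ' h y => (hbound γ' h y).1
  obtain ⟨hFJk, hHderiv⟩ := hasDerivAt_integral_mul_paramKernel hσc hσ hΓopen hScont hSdot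
    hSdotCont hFm hγ ((integrable_mul_paramDens_iff hσ hG).1 hFf) hδ hg₂
    fun γ' h y => (hbound γ' h y).2
  refine ⟨?_, ?_⟩
  · simp only [integral_mul_paramDens]
    exact (hGderiv.inv_mul hHderiv (paramG_pos hσ hG).ne').congr_deriv (by ring)
  · simp only [intervalIntegral_eq_driftPrimitive_sub hσc hσ (hSdotCont.uncurry_left γ)]
    rw [integral_integral_mul_sub_mul (f := paramDens σ S γ) (hG.const_mul _)
      (integral_paramDens hσ hG) ((integrable_mul_paramDens_iff hσ hG).2 hJk)
      ((integrable_mul_paramDens_iff hσ hG).2 hFJk) hFf]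

/-- Under hypotheses permitting differentiation under the integral sign
(joint continuity of `Ṡ` and locally uniform integrable dominating functions for the
γ-derivatives of both `y ↦ σ(y)⁻² exp(2∫_0^y S(γ,v)/σ(v)²dv)` and
`y ↦ F(y) σ(y)⁻² exp(2∫_0^y S(γ,v)/σ(v)²dv)`), the function `ϑ(γ) = ∫ F f(γ,·)` is
differentiable with derivative
`ϑ̇(γ) = 2(∫ F(x)(∫_0^x Ṡ/σ²) f(γ,x) dx − ϑ(γ) ∫ (∫_0^z Ṡ/σ²) f(γ,z) dz)`, which equals the
double integral `2 ∫∫ F(x)(∫_z^x Ṡ/σ²) f(γ,x) f(γ,z) dx dz = 2 E_γ[F(ξ) ∫_ζ^ξ Ṡ/σ² dv]`. -/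
theorem moment_estimation_stmt11
    (σ : ℝ → ℝ) (hσc : Continuous σ) (hσpos : ∀ x, 0 < σ x)
    (Γ : Set ℝ) (hΓopen : IsOpen Γ) (hΓconn : Γ.OrdConnected)
    (S Sdot : ℝ → ℝ → ℝ)
    (hScont : ∀ γ ∈ Γ, Continuous (S γ))
    (hGfin : ∀ γ ∈ Γ, Integrable (paramKernel σ S γ))
    (F : ℝ → ℝ) (hFm : Measurable F)
    (hFint : ∀ γ ∈ Γ, Integrable (fun y => |F y| * paramDens σ S γ y))
    (hSdot : ∀ x : ℝ, ∀ γ ∈ Γ, HasDerivAt (fun γ' => S γ' x) (Sdot γ x) γ)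
    (hSdotCont : Continuous (Function.uncurry Sdot))
    (hdom : ∀ γ₀ ∈ Γ, ∃ δ > (0:ℝ), ∃ g₁ g₂ : ℝ → ℝ, Integrable g₁ ∧ Integrable g₂ ∧
      ∀ γ : ℝ, |γ - γ₀| < δ → ∀ y : ℝ,
        |2 * (∫ v in (0:ℝ)..y, Sdot γ v / (σ v) ^ 2) * paramKernel σ S γ y| ≤ g₁ y ∧
        |F y * (2 * (∫ v in (0:ℝ)..y, Sdot γ v / (σ v) ^ 2)) * paramKernel σ S γ y| ≤ g₂ y) :
    ∀ γ ∈ Γ,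
      HasDerivAt (fun γ' => ∫ y : ℝ, F y * paramDens σ S γ' y)
        (2 * ((∫ x : ℝ, F x * (∫ v in (0:ℝ)..x, Sdot γ v / (σ v) ^ 2) * paramDens σ S γ x)
          - (∫ y : ℝ, F y * paramDens σ S γ y)
            * ∫ z : ℝ, (∫ v in (0:ℝ)..z, Sdot γ v / (σ v) ^ 2) * paramDens σ S γ z)) γ ∧
      2 * ((∫ x : ℝ, F x * (∫ v in (0:ℝ)..x, Sdot γ v / (σ v) ^ 2) * paramDens σ S γ x)
          - (∫ y : ℝ, F y * paramDens σ S γ y)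
            * ∫ z : ℝ, (∫ v in (0:ℝ)..z, Sdot γ v / (σ v) ^ 2) * paramDens σ S γ z)
        = 2 * ∫ x : ℝ, ∫ z : ℝ,
            F x * (∫ v in z..x, Sdot γ v / (σ v) ^ 2) * paramDens σ S γ x * paramDens σ S γ z :=
  moment_estimation_stmt11_general σ hσc hσpos Γ hΓopen S Sdot hScont hGfin F hFm hFint hSdot
    hSdotCont hdom
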